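/- Let A be a commutative ring and I, J ideals of A. Then Ī · J̄ ⊆ (I·J)‾, i.e. the product of an element integral over I with an element integral over J is integral over IJ. -/

import Mathlib

/-- `f` is integral over the ideal `I`: there is an equation
`f^k + a₁ f^(k-1) + ⋯ + a_k = 0` with `aᵢ ∈ Iⁱ` (and `k ≥ 1`). -/
def IsIntegralOverIdeal {A : Type*} [CommRing A] (I : Ideal A) (f : A) : Prop :=
  ∃ (k : ℕ) (a : ℕ → A), 0 < k ∧ (∀ i ∈ Finset.Icc 1 k, a i ∈ I ^ i) ∧
    f ^ k + ∑ i ∈ Finset.Icc 1 k, a i * f ^ (k - i) = 0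

/-!
If `f` is integral over a finitely generated ideal `I` and `T = I + (f)`, the equation of integral
dependence gives `f Tⁿ ⊆ I Tⁿ` for all large `n`. For `g` integral over a finitely generated `J` and
`S = J + (g)`, the finitely generated ideal `M = Tⁿ Sⁿ` then satisfies `fg M ⊆ IJ M` and contains
`(fg)ⁿ`, so the Cayley–Hamilton (determinant) trick produces an equation of integral dependence of
`fg` over `IJ`. The general case reduces to this one, since an equation of integral dependence
involves only finitely many elements of `I`.
-/

open Polynomial

section

variable {A : Type*} [CommRing A] {I : Ideal A} {f : A}

theorem IsIntegralOverIdeal.mono {I' : Ideal A} (h : I ≤ I') (hf : IsIntegralOverIdeal I f) :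
    IsIntegralOverIdeal I' f := by
  obtain ⟨k, a, hk, ha, heq⟩ := hf
  exact ⟨k, a, hk, fun i hi => Ideal.pow_right_mono h i (ha i hi), heq⟩

theorem Ideal.exists_fg_le_mem_pow (I : Ideal A) {n : ℕ} {a : A} (ha : a ∈ I ^ n) :
    ∃ I₀ ≤ I, I₀.FG ∧ a ∈ I₀ ^ n := by
  induction n generalizing a with
  | zero => exact ⟨⊥, bot_le, Submodule.fg_bot, by simp⟩
  | succ n ih =>
    rw [pow_succ] at ha
    refine Submodule.mul_induction_on ha (fun b hb r hr => ?_) ?_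
    · obtain ⟨I₀, hle, hfg, hb₀⟩ := ih hb
      refine ⟨I₀ ⊔ Ideal.span {r}, sup_le hle (Ideal.span_singleton_le_iff_mem _ |>.mpr hr),
        Submodule.FG.sup hfg (Submodule.fg_span_singleton r), ?_⟩
      rw [pow_succ]
      exact Ideal.mul_mem_mul (Ideal.pow_right_mono le_sup_left n hb₀)
        (Ideal.mem_sup_right (Ideal.mem_span_singleton_self r))
    · rintro x y ⟨I₁, hle₁, hfg₁, hx⟩ ⟨I₂, hle₂, hfg₂, hy⟩
      exact ⟨I₁ ⊔ I₂, sup_le hle₁ hle₂, Submodule.FG.sup hfg₁ hfg₂,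
        add_mem (Ideal.pow_right_mono le_sup_left _ hx) (Ideal.pow_right_mono le_sup_right _ hy)⟩

theorem IsIntegralOverIdeal.exists_fg_le (hf : IsIntegralOverIdeal I f) :
    ∃ I₀ ≤ I, I₀.FG ∧ IsIntegralOverIdeal I₀ f := by
  obtain ⟨k, a, hk, ha, heq⟩ := hf
  choose I₀ hle hfg hmem using fun (i : Finset.Icc 1 k) => I.exists_fg_le_mem_pow (ha i i.2)
  refine ⟨⨆ i, I₀ i, iSup_le hle, ?_, k, a, hk, fun i hi => ?_, heq⟩
  · exact Submodule.fg_iSup _ hfg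
  · exact Ideal.pow_right_mono (le_iSup I₀ ⟨i, hi⟩) i (hmem ⟨i, hi⟩)

theorem isIntegralOverIdeal_of_monic {p : A[X]} (hp : p.Monic) (hdeg : 0 < p.natDegree)
    (hcoeff : ∀ k, p.coeff k ∈ I ^ (p.natDegree - k)) (hf : p.eval f = 0) :
    IsIntegralOverIdeal I f := by
  set d := p.natDegree
  refine ⟨d, fun i => p.coeff (d - i), hdeg, fun i hi => ?_, ?_⟩
  · simpa [Nat.sub_sub_self (Finset.mem_Icc.mp hi).2] using hcoeff (d - i)
  · have hsum : ∑ i ∈ Finset.Icc 1 d, p.coeff (d - i) * f ^ (d - i) =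
        ∑ j ∈ Finset.range d, p.coeff j * f ^ j := by
      rw [← Finset.Ico_add_one_right_eq_Icc, Finset.sum_Ico_eq_sum_range,
        ← Finset.sum_range_reflect]
      refine Finset.sum_congr (by simp) fun j hj => ?_
      rw [Finset.mem_range] at hj
      congr 2 <;> omega
    rw [hsum, ← hf, eval_eq_sum_range, Finset.sum_range_succ, hp.coeff_natDegree, one_mul,
      add_comm]

theorem isIntegralOverIdeal_of_span_mul_le {M : Ideal A} (hM : M.FG)
    (hfM : Ideal.span {f} * M ≤ I * M) {n : ℕ} (hn : f ^ n ∈ M) : IsIntegralOverIdeal I f := by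
  rcases subsingleton_or_nontrivial A with _ | _
  · exact ⟨1, 0, one_pos, fun _ _ => zero_mem _, Subsingleton.elim _ _⟩
  have : Module.Finite A M := Module.Finite.iff_fg.mpr hM
  obtain ⟨p, hp, -, hcoeff, hpM⟩ :=
    LinearMap.exists_monic_and_natDegree_eq_and_coeff_mem_pow_and_aeval_eq_zero A
      (algebraMap A (Module.End A M) f) I (by
        rintro _ ⟨x, rfl⟩
        rw [Submodule.mem_smul_top_iff, Module.algebraMap_end_apply, Submodule.coe_smul,
          smul_eq_mul]
        exact hfM (Ideal.mul_mem_mul (Ideal.mem_span_singleton_self f) x.2))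
  have hpf : p.eval f * f ^ n = 0 := by
    have := congr(($hpM ⟨f ^ n, hn⟩ : A))
    simpa [aeval_algebraMap_apply] using this
  -- `p(f)` annihilates `f ^ n ∈ M`, and the extra factor `X` makes the degree positive.
  refine isIntegralOverIdeal_of_monic (p := p * X ^ (n + 1)) (hp.mul (monic_X_pow _))
    (by rw [natDegree_mul_X_pow _ hp.ne_zero]; omega) (fun k => ?_) ?_
  · rw [natDegree_mul_X_pow _ hp.ne_zero, coeff_mul_X_pow']
    split_ifs with h
    · convert hcoeff (k - (n + 1)) using 2; omega
    · exact zero_mem _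
  · rw [eval_mul, eval_pow, eval_X, pow_succ, ← mul_assoc, hpf, zero_mul]

theorem Ideal.sup_span_singleton_pow_succ_le (I : Ideal A) (f : A) (n : ℕ) :
    (I ⊔ Ideal.span {f}) ^ (n + 1) ≤ I * (I ⊔ Ideal.span {f}) ^ n ⊔ Ideal.span {f ^ (n + 1)} := by
  set T := I ⊔ Ideal.span {f}
  induction n with
  | zero => simp [T]
  | succ n ih =>
    have hspan : Ideal.span {f ^ (n + 1)} ≤ T ^ (n + 1) :=
      (Ideal.span_singleton_pow f (n + 1)).symm.le.trans
        (Ideal.pow_right_mono le_sup_right _)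
    have hmul : ∀ J ≤ T, I * T ^ n * J ≤ I * T ^ (n + 1) := fun J hJ => by
      rw [mul_assoc, pow_succ]
      exact Ideal.mul_mono_right (Ideal.mul_mono_right hJ)
    calc T ^ (n + 1 + 1) = T ^ (n + 1) * T := pow_succ _ _
      _ ≤ (I * T ^ n ⊔ Ideal.span {f ^ (n + 1)}) * (I ⊔ Ideal.span {f}) := Ideal.mul_mono_left ih
      _ ≤ I * T ^ (n + 1) ⊔ Ideal.span {f ^ (n + 1 + 1)} := by
        rw [Ideal.sup_mul, Ideal.mul_sup, Ideal.mul_sup, Ideal.span_singleton_mul_span_singleton,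
          ← pow_succ]
        refine sup_le (sup_le ?_ ?_) (sup_le ?_ le_sup_right) <;> refine le_sup_of_le_left ?_
        · exact hmul I le_sup_left
        · exact hmul _ le_sup_right
        · exact (mul_comm I _).symm.le.trans (Ideal.mul_mono_right hspan)

theorem IsIntegralOverIdeal.exists_pow_succ_mem (hf : IsIntegralOverIdeal I f) :
    ∃ m, f ^ (m + 1) ∈ I * (I ⊔ Ideal.span {f}) ^ m := by
  obtain ⟨k, a, hk, ha, heq⟩ := hf
  obtain ⟨m, rfl⟩ : ∃ m, k = m + 1 := ⟨k - 1, by omega⟩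
  set T := I ⊔ Ideal.span {f}
  have hterm : ∀ i ∈ Finset.Icc 1 (m + 1), a i * f ^ (m + 1 - i) ∈ I * T ^ m := by
    intro i hi
    obtain ⟨j, rfl⟩ : ∃ j, i = j + 1 := ⟨i - 1, by grind⟩
    have hIT : I * T ^ j * T ^ (m + 1 - (j + 1)) = I * T ^ m := by
      rw [mul_assoc, ← pow_add]
      congr 2
      grind
    rw [← hIT]
    refine Ideal.mul_mem_mul ?_
      (Ideal.pow_mem_pow (Ideal.mem_sup_right (Ideal.mem_span_singleton_self f)) _)
    have hai := ha _ hi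
    rw [pow_succ'] at hai
    exact Ideal.mul_mono_right (Ideal.pow_right_mono le_sup_left j) hai
  refine ⟨m, ?_⟩
  rw [eq_neg_of_add_eq_zero_left heq]
  exact neg_mem (Ideal.sum_mem _ hterm)

theorem IsIntegralOverIdeal.exists_span_mul_pow_le (hf : IsIntegralOverIdeal I f) :
    ∃ m, ∀ n ≥ m,
      Ideal.span {f} * (I ⊔ Ideal.span {f}) ^ n ≤ I * (I ⊔ Ideal.span {f}) ^ n := by
  obtain ⟨m, hpow⟩ := hf.exists_pow_succ_mem
  set T := I ⊔ Ideal.span {f}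
  have hm : Ideal.span {f} * T ^ m ≤ I * T ^ m :=
    calc Ideal.span {f} * T ^ m ≤ T ^ (m + 1) := by
          rw [pow_succ']; exact Ideal.mul_mono_left le_sup_right
      _ ≤ I * T ^ m ⊔ Ideal.span {f ^ (m + 1)} := I.sup_span_singleton_pow_succ_le f m
      _ ≤ I * T ^ m := sup_le le_rfl ((Ideal.span_singleton_le_iff_mem _).mpr hpow)
  refine ⟨m, fun n hn => ?_⟩
  obtain ⟨n, rfl⟩ := Nat.exists_eq_add_of_le hn
  calc Ideal.span {f} * T ^ (m + n) = Ideal.span {f} * T ^ m * T ^ n := by rw [pow_add, mul_assoc]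
    _ ≤ I * T ^ m * T ^ n := Ideal.mul_mono_left hm
    _ = I * T ^ (m + n) := by rw [pow_add, mul_assoc]

theorem IsIntegralOverIdeal.mul_of_fg {J : Ideal A} {g : A} (hI : I.FG) (hJ : J.FG)
    (hf : IsIntegralOverIdeal I f) (hg : IsIntegralOverIdeal J g) :
    IsIntegralOverIdeal (I * J) (f * g) := by
  obtain ⟨m₁, hm₁⟩ := hf.exists_span_mul_pow_le
  obtain ⟨m₂, hm₂⟩ := hg.exists_span_mul_pow_le
  set N := m₁ + m₂
  set T := I ⊔ Ideal.span {f}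
  set S := J ⊔ Ideal.span {g}
  have hM : (T ^ N * S ^ N).FG :=
    Submodule.FG.mul (Submodule.FG.pow (Submodule.FG.sup hI (Submodule.fg_span_singleton f)) N)
      (Submodule.FG.pow (Submodule.FG.sup hJ (Submodule.fg_span_singleton g)) N)
  refine isIntegralOverIdeal_of_span_mul_le hM (n := N) ?_ ?_
  · calc Ideal.span {f * g} * (T ^ N * S ^ N)
          = (Ideal.span {f} * T ^ N) * (Ideal.span {g} * S ^ N) := by
            rw [← Ideal.span_singleton_mul_span_singleton]; ring
      _ ≤ (I * T ^ N) * (J * S ^ N) := Ideal.mul_mono (hm₁ N (by omega)) (hm₂ N (by omega))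
      _ = I * J * (T ^ N * S ^ N) := by ring
  · rw [mul_pow]
    exact Ideal.mul_mem_mul
      (Ideal.pow_mem_pow (Ideal.mem_sup_right (Ideal.mem_span_singleton_self f)) N)
      (Ideal.pow_mem_pow (Ideal.mem_sup_right (Ideal.mem_span_singleton_self g)) N)

theorem IsIntegralOverIdeal.mul {J : Ideal A} {g : A} (hf : IsIntegralOverIdeal I f)
    (hg : IsIntegralOverIdeal J g) : IsIntegralOverIdeal (I * J) (f * g) := by
  obtain ⟨I₀, hI₀, hI₀fg, hf₀⟩ := hf.exists_fg_le
  obtain ⟨J₀, hJ₀, hJ₀fg, hg₀⟩ := hg.exists_fg_le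
  exact (hf₀.mul_of_fg hI₀fg hJ₀fg hg₀).mono (Ideal.mul_mono hI₀ hJ₀)

end

/-- `Ī·J̄ ⊆ (I·J)‾`: the product of an element integral over `I`
with an element integral over `J` is integral over `I·J`; consequently, for the
integral-closure ideals, `Ī·J̄ ≤ (I·J)‾`. -/
theorem integralClosure_mul_subset {A : Type*} [CommRing A] (I J : Ideal A)
    (Ibar Jbar IJbar : Ideal A)
    (hIbar : ∀ f : A, f ∈ Ibar ↔ IsIntegralOverIdeal I f)
    (hJbar : ∀ f : A, f ∈ Jbar ↔ IsIntegralOverIdeal J f)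
    (hIJbar : ∀ f : A, f ∈ IJbar ↔ IsIntegralOverIdeal (I * J) f) :
    (∀ f g : A, IsIntegralOverIdeal I f → IsIntegralOverIdeal J g →
        IsIntegralOverIdeal (I * J) (f * g)) ∧
    Ibar * Jbar ≤ IJbar :=
  ⟨fun _ _ hf hg => hf.mul hg, Ideal.mul_le.mpr fun f hf g hg =>
    (hIJbar _).mpr (((hIbar f).mp hf).mul ((hJbar g).mp hg))⟩
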